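/- arXiv:2502.07154 — 6 statements merged into one kernel-verified Lean document; each statement's English description precedes it below -/
import Mathlib

section
/- Let N ≥ 2, k ≥ 2, and p_1 ≥ ... ≥ p_k > 0 with Σ p_i = 1 (suitably normalized). Suppose the minimizer (q_1*,...,q_k*) of Σ_{i=1}^k p_i (1-q_i)^N subject to q_i ≥ 0 and Σ q_i = 1 has all coordinates strictly positive. Then the minimizer is given explicitly by q_i* = 1 - (k-1) p_i^{-1/(N-1)} / Σ_{s=1}^k p_s^{-1/(N-1)} for each i. -/
private lemma sum_diff_pair {k : ℕ} (i j : Fin k) (hij : i ≠ j) (f g : Fin k → ℝ)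
    (h : ∀ s, s ≠ i → s ≠ j → f s = g s) :
    ∑ s, f s - ∑ s, g s = (f i - g i) + (f j - g j) := by
  have h1 : ∑ s, (f s - g s) = ∑ s ∈ ({i, j} : Finset (Fin k)), (f s - g s) := by
    refine (Finset.sum_subset (Finset.subset_univ _) ?_).symm
    intro s _ hs
    simp only [Finset.mem_insert, Finset.mem_singleton, not_or] at hs
    rw [h s hs.1 hs.2]; ring
  rw [← Finset.sum_sub_distrib, h1, Finset.sum_pair hij]

theorem interior_minimizer_closed_form (N k : ℕ) (hN : 2 ≤ N) (hk : 2 ≤ k)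
    (p : Fin k → ℝ) (hp : ∀ i, 0 < p i)
    (hpmono : ∀ i j : Fin k, i ≤ j → p j ≤ p i) (hpsum : ∑ i, p i = 1)
    (q : Fin k → ℝ) (hq0 : ∀ i, 0 < q i) (hqs : ∑ i, q i = 1)
    (hmin : ∀ r : Fin k → ℝ, (∀ i, 0 ≤ r i) → ∑ i, r i = 1 →
      ∑ i, p i * (1 - q i) ^ N ≤ ∑ i, p i * (1 - r i) ^ N) :
    ∀ i, q i = 1 - ((k:ℝ) - 1) * (p i) ^ (-(1:ℝ)/((N:ℝ)-1)) /
      ∑ s, (p s) ^ (-(1:ℝ)/((N:ℝ)-1)) := by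
  have hne : Nonempty (Fin k) := ⟨⟨0, by omega⟩⟩
  have hnt : Nontrivial (Fin k) := ⟨⟨0, by omega⟩, ⟨1, by omega⟩, by simp [Fin.ext_iff]⟩
  -- each q s < 1
  have hq1 : ∀ s, q s < 1 := by
    intro s
    obtain ⟨t, ht⟩ := exists_ne s
    have hle : q s + q t ≤ 1 := by
      rw [← hqs]
      have := Finset.sum_le_sum_of_subset_of_nonneg
        (Finset.subset_univ ({s, t} : Finset (Fin k))) (fun x _ _ => (hq0 x).le)
      rwa [Finset.sum_pair (Ne.symm ht)] at this
    linarith [hq0 t]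
  -- key: the products are all equal
  have key : ∀ i j : Fin k, p i * (1 - q i)^(N-1) = p j * (1 - q j)^(N-1) := by
    intro i j
    rcases eq_or_ne i j with rfl | hij
    · rfl
    set g : ℝ → ℝ := fun t => p i * (1 - q i - t)^N + p j * (1 - q j + t)^N with hg
    have hloc : IsLocalMin g 0 := by
      have hmem : Set.Ioo (-(q i)) (q j) ∈ nhds (0:ℝ) :=
        Ioo_mem_nhds (by linarith [hq0 i]) (hq0 j)
      refine Filter.eventually_of_mem hmem ?_
      intro t ht
      obtain ⟨ht1, ht2⟩ := ht
      set r : Fin k → ℝ := Function.update (Function.update q i (q i + t)) j (q j - t) with hr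
      have hri : r i = q i + t := by
        rw [hr, Function.update_of_ne hij, Function.update_self]
      have hrj : r j = q j - t := by rw [hr, Function.update_self]
      have hrs : ∀ s, s ≠ i → s ≠ j → r s = q s := by
        intro s h1 h2
        rw [hr, Function.update_of_ne h2, Function.update_of_ne h1]
      have hrnn : ∀ s, 0 ≤ r s := by
        intro s
        rcases eq_or_ne s i with rfl | h1
        · rw [hri]; linarith
        rcases eq_or_ne s j with rfl | h2
        · rw [hrj]; linarith
        · rw [hrs s h1 h2]; exact (hq0 s).le
      have hrsum : ∑ s, r s = 1 := by
        have := sum_diff_pair i j hij r q hrs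
        rw [hri, hrj] at this
        linarith [hqs]
      have hle := hmin r hrnn hrsum
      have hdiff := sum_diff_pair i j hij (fun s => p s * (1 - r s)^N)
        (fun s => p s * (1 - q s)^N) (fun s h1 h2 => by show p s * (1 - r s)^N = p s * (1 - q s)^N; rw [hrs s h1 h2])
      simp only [hri, hrj] at hdiff
      have hgt : g t - g 0 = (∑ s, p s * (1 - r s)^N) - (∑ s, p s * (1 - q s)^N) := by
        rw [hdiff, hg]
        simp only
        ring_nf
      simp only [ge_iff_le]
      linarith
    have hd1 : HasDerivAt (fun t : ℝ => 1 - q i - t) (-1) 0 := by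
      simpa using (hasDerivAt_id (0:ℝ)).const_sub (1 - q i)
    have hd2 : HasDerivAt (fun t : ℝ => 1 - q j + t) 1 0 := by
      simpa [add_comm] using (hasDerivAt_id (0:ℝ)).const_add (1 - q j)
    have hD : HasDerivAt g
        (p i * ((N:ℝ) * (1 - q i - 0)^(N-1) * (-1)) + p j * ((N:ℝ) * (1 - q j + 0)^(N-1) * 1)) 0 :=
      ((hd1.pow N).const_mul (p i)).add ((hd2.pow N).const_mul (p j))
    have h0 := hloc.hasDerivAt_eq_zero hD
    simp only [sub_zero, add_zero, mul_one, mul_neg] at h0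
    have hN0 : (N:ℝ) ≠ 0 := by positivity
    have h1 : (N:ℝ) * (p j * (1 - q j)^(N-1) - p i * (1 - q i)^(N-1)) = 0 := by
      linear_combination h0
    rcases mul_eq_zero.mp h1 with h | h
    · exact absurd h hN0
    · linarith
  -- algebra
  have hNm : (0:ℝ) < (N:ℝ) - 1 := by
    have : (2:ℝ) ≤ (N:ℝ) := by exact_mod_cast hN
    linarith
  have hcast : ((N - 1 : ℕ) : ℝ) = (N:ℝ) - 1 := by
    rw [Nat.cast_sub (by omega)]; simp
  set β : ℝ := ((N:ℝ) - 1)⁻¹ with hβ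
  set i₀ : Fin k := ⟨0, by omega⟩ with hi₀
  set c : ℝ := p i₀ * (1 - q i₀)^(N-1) with hc
  have hcall : ∀ s, p s * (1 - q s)^(N-1) = c := fun s => key s i₀
  have hcpos : 0 < c := by
    rw [hc]
    have h1q : (0:ℝ) < 1 - q i₀ := by linarith [hq1 i₀]
    have := hp i₀
    positivity
  have hform : ∀ s, 1 - q s = c ^ β * (p s) ^ (-β) := by
    intro s
    have hqs1 : (0:ℝ) < 1 - q s := by linarith [hq1 s]
    have h1 : (1 - q s)^(N-1) = c / p s := by
      rw [eq_div_iff (hp s).ne']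
      linarith [hcall s]
    have h2 : ((1 - q s)^(N-1) : ℝ) ^ β = (c / p s) ^ β := by rw [h1]
    rw [← Real.rpow_natCast (1 - q s) (N-1), ← Real.rpow_mul hqs1.le, hcast,
      mul_inv_cancel₀ hNm.ne', Real.rpow_one,
      Real.div_rpow hcpos.le (hp s).le] at h2
    rw [h2, Real.rpow_neg (hp s).le, div_eq_mul_inv]
  have hsum1 : ∑ s, (1 - q s) = (k:ℝ) - 1 := by
    rw [Finset.sum_sub_distrib, hqs]
    simp [Finset.card_univ]
  set S : ℝ := ∑ s, (p s) ^ (-β) with hS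
  have hSpos : 0 < S := by
    apply Finset.sum_pos (fun s _ => Real.rpow_pos_of_pos (hp s) _) Finset.univ_nonempty
  have hmul : c ^ β * S = (k:ℝ) - 1 := by
    rw [hS, Finset.mul_sum, ← hsum1]
    exact Finset.sum_congr rfl (fun s _ => (hform s).symm)
  have hc2 : c ^ β = ((k:ℝ) - 1) / S := by
    rw [eq_div_iff hSpos.ne']
    exact hmul
  intro i
  have hexp : -(1:ℝ)/((N:ℝ)-1) = -β := by rw [hβ, neg_div, one_div]
  simp only [hexp]
  have := hform i
  rw [hc2] at this
  rw [← hS]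
  field_simp at this ⊢
  linarith
end

section
/- Let N ≥ 2, p_1 ≥ p_2 > 0, and let s be the smallest positive integer with p_1 + s·p_2 ≥ 1. Then the minimizer q_1* of the function f(q_1) = p_1 (1-q_1)^N + s·p_2·(1 - (1-q_1)/s)^N over q_1 in [0,1] equals 1 - s·p_1^{1/(1-N)} p_2^{1/(N-1)} / (s + p_1^{1/(1-N)} p_2^{1/(N-1)}). -/
lemma sum_key (n : ℕ) (hn : 2 ≤ n) (x y : ℝ) (hx : 0 ≤ x) (hy : 0 ≤ y) :
    0 ≤ ((∑ i ∈ Finset.range n, x ^ i * y ^ (n - 1 - i)) - (n:ℝ) * y ^ (n-1)) * (x - y) := by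
  have hconst : (n:ℝ) * y ^ (n-1) = ∑ _i ∈ Finset.range n, y ^ (n-1) := by
    simp [Finset.sum_const, nsmul_eq_mul]
  rcases le_total y x with h | h
  · apply mul_nonneg _ (sub_nonneg.2 h)
    rw [sub_nonneg, hconst]
    apply Finset.sum_le_sum
    intro i hi
    have hi' : i < n := Finset.mem_range.1 hi
    have : y ^ (n-1) = y ^ i * y ^ (n-1-i) := by rw [← pow_add]; congr 1; omega
    rw [this]
    exact mul_le_mul_of_nonneg_right (pow_le_pow_left₀ hy h i) (pow_nonneg hy _)
  · have h1 : (∑ i ∈ Finset.range n, x ^ i * y ^ (n - 1 - i)) - (n:ℝ) * y ^ (n-1) ≤ 0 := by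
      rw [sub_nonpos, hconst]
      apply Finset.sum_le_sum
      intro i hi
      have hi' : i < n := Finset.mem_range.1 hi
      have : y ^ (n-1) = y ^ i * y ^ (n-1-i) := by rw [← pow_add]; congr 1; omega
      rw [this]
      exact mul_le_mul_of_nonneg_right (pow_le_pow_left₀ hx h i) (pow_nonneg hy _)
    nlinarith [h1, sub_nonpos.2 h]

lemma tangent_le (n : ℕ) (hn : 2 ≤ n) (x y : ℝ) (hx : 0 ≤ x) (hy : 0 ≤ y) :
    y ^ n + (n:ℝ) * y ^ (n-1) * (x - y) ≤ x ^ n := by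
  have hS := geom_sum₂_mul x y n
  have key := sum_key n hn x y hx hy
  nlinarith [key, hS]

lemma sum_key_lt (n : ℕ) (hn : 2 ≤ n) (x y : ℝ) (hx : 0 ≤ x) (hy : 0 ≤ y) (hxy : x ≠ y) :
    0 < ((∑ i ∈ Finset.range n, x ^ i * y ^ (n - 1 - i)) - (n:ℝ) * y ^ (n-1)) * (x - y) := by
  have hconst : (n:ℝ) * y ^ (n-1) = ∑ _i ∈ Finset.range n, y ^ (n-1) := by
    simp [Finset.sum_const, nsmul_eq_mul]
  have hmem : n - 1 ∈ Finset.range n := by simp; omega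
  rcases lt_or_gt_of_ne hxy with h | h
  · -- x < y
    have h1 : (∑ i ∈ Finset.range n, x ^ i * y ^ (n - 1 - i)) - (n:ℝ) * y ^ (n-1) < 0 := by
      rw [sub_neg, hconst]
      apply Finset.sum_lt_sum
      · intro i hi
        have hi' : i < n := Finset.mem_range.1 hi
        have : y ^ (n-1) = y ^ i * y ^ (n-1-i) := by rw [← pow_add]; congr 1; omega
        rw [this]
        exact mul_le_mul_of_nonneg_right (pow_le_pow_left₀ hx h.le i) (pow_nonneg hy _)
      · refine ⟨n-1, hmem, ?_⟩
        have h0 : n - 1 - (n-1) = 0 := by omega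
        rw [h0, pow_zero, mul_one]
        exact pow_lt_pow_left₀ h hx (by omega)
    nlinarith [h1, sub_neg.2 h]
  · -- y < x
    apply mul_pos _ (by linarith)
    rw [sub_pos, hconst]
    apply Finset.sum_lt_sum
    · intro i hi
      have hi' : i < n := Finset.mem_range.1 hi
      have : y ^ (n-1) = y ^ i * y ^ (n-1-i) := by rw [← pow_add]; congr 1; omega
      rw [this]
      exact mul_le_mul_of_nonneg_right (pow_le_pow_left₀ hy h.le i) (pow_nonneg hy _)
    · refine ⟨n-1, hmem, ?_⟩
      have h0 : n - 1 - (n-1) = 0 := by omega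
      rw [h0, pow_zero, mul_one]
      exact pow_lt_pow_left₀ h hy (by omega)

lemma tangent_lt (n : ℕ) (hn : 2 ≤ n) (x y : ℝ) (hx : 0 ≤ x) (hy : 0 ≤ y) (hxy : x ≠ y) :
    y ^ n + (n:ℝ) * y ^ (n-1) * (x - y) < x ^ n := by
  have hS := geom_sum₂_mul x y n
  have key := sum_key_lt n hn x y hx hy hxy
  nlinarith [key, hS]

theorem one_dim_minimizer (N : ℕ) (hN : 2 ≤ N) (p1 p2 : ℝ)
    (h2 : 0 < p2) (h12 : p2 ≤ p1)
    (s : ℕ) (hs0 : 0 < s) (hs1 : 1 ≤ p1 + (s:ℝ) * p2)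
    (hsmin : ∀ t : ℕ, 0 < t → 1 ≤ p1 + (t:ℝ) * p2 → s ≤ t) :
    let a : ℝ := 1 - (s:ℝ) * p1 ^ ((1:ℝ)/(1-(N:ℝ))) * p2 ^ ((1:ℝ)/((N:ℝ)-1)) /
      ((s:ℝ) + p1 ^ ((1:ℝ)/(1-(N:ℝ))) * p2 ^ ((1:ℝ)/((N:ℝ)-1)))
    a ∈ Set.Icc (0:ℝ) 1 ∧
    (∀ q1 ∈ Set.Icc (0:ℝ) 1,
      p1 * (1 - a) ^ N + (s:ℝ) * p2 * (1 - (1 - a)/(s:ℝ)) ^ N ≤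
        p1 * (1 - q1) ^ N + (s:ℝ) * p2 * (1 - (1 - q1)/(s:ℝ)) ^ N) ∧
    (∀ q1 ∈ Set.Icc (0:ℝ) 1,
      (∀ r ∈ Set.Icc (0:ℝ) 1,
        p1 * (1 - q1) ^ N + (s:ℝ) * p2 * (1 - (1 - q1)/(s:ℝ)) ^ N ≤
          p1 * (1 - r) ^ N + (s:ℝ) * p2 * (1 - (1 - r)/(s:ℝ)) ^ N) → q1 = a) := by
  intro a
  have hp1 : 0 < p1 := lt_of_lt_of_le h2 h12
  have hNR : (2:ℝ) ≤ (N:ℝ) := by exact_mod_cast hN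
  have hN1 : (N:ℝ) - 1 ≠ 0 := by linarith
  have hN1' : 1 - (N:ℝ) ≠ 0 := by linarith
  set c : ℝ := p1 ^ ((1:ℝ)/(1-(N:ℝ))) * p2 ^ ((1:ℝ)/((N:ℝ)-1)) with hc_def
  have hc : 0 < c := mul_pos (Real.rpow_pos_of_pos hp1 _) (Real.rpow_pos_of_pos h2 _)
  have hsR : (1:ℝ) ≤ (s:ℝ) := by exact_mod_cast hs0
  have hsc : 0 < (s:ℝ) + c := by linarith
  have hsR0 : (0:ℝ) < (s:ℝ) := by linarith
  -- cast of N-1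
  have hmcast : ((N - 1 : ℕ) : ℝ) = (N:ℝ) - 1 := by
    simp [Nat.cast_sub (by omega : 1 ≤ N)]
  -- key algebraic identity
  have hkey0 : p1 * c ^ (N - 1) = p2 := by
    have e1 : (p1 ^ ((1:ℝ)/(1-(N:ℝ)))) ^ (N - 1) = p1⁻¹ := by
      rw [← Real.rpow_natCast (p1 ^ ((1:ℝ)/(1-(N:ℝ)))) (N-1), ← Real.rpow_mul hp1.le, hmcast]
      rw [show (1:ℝ)/(1-(N:ℝ)) * ((N:ℝ) - 1) = -1 by field_simp; ring]
      exact Real.rpow_neg_one p1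
    have e2 : (p2 ^ ((1:ℝ)/((N:ℝ)-1))) ^ (N - 1) = p2 := by
      rw [← Real.rpow_natCast (p2 ^ ((1:ℝ)/((N:ℝ)-1))) (N-1), ← Real.rpow_mul h2.le, hmcast]
      rw [show (1:ℝ)/((N:ℝ)-1) * ((N:ℝ) - 1) = 1 by field_simp]
      exact Real.rpow_one p2
    rw [hc_def, mul_pow, e1, e2]
    field_simp
  have hc1 : c ≤ 1 := by
    by_contra hlt
    push_neg at hlt
    have h1c : (1:ℝ) < c ^ (N-1) := one_lt_pow₀ hlt (by omega)
    nlinarith [hkey0]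
  set q : ℝ := (s:ℝ) * c / ((s:ℝ) + c) with hq_def
  set w : ℝ := (s:ℝ) / ((s:ℝ) + c) with hw_def
  have hq0 : 0 < q := by positivity
  have hq1 : q ≤ 1 := by
    rw [hq_def, div_le_one hsc]
    nlinarith
  have hw0 : 0 < w := by positivity
  have ha : a = 1 - q := by
    show (1 : ℝ) - _ = _
    rw [hq_def, mul_assoc]
  have h1a : 1 - a = q := by rw [ha]; ring
  have hv : 1 - q / (s:ℝ) = w := by
    rw [hq_def, hw_def]
    field_simp
    ring
  have hkey : p1 * q ^ (N-1) = p2 * w ^ (N-1) := by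
    have hq_eq : q = c * w := by rw [hq_def, hw_def]; ring
    rw [hq_eq, mul_pow, ← mul_assoc, hkey0]
  have hmemA : a ∈ Set.Icc (0:ℝ) 1 := by
    constructor
    · rw [ha]; linarith
    · rw [ha]; linarith
  -- main inequality, strict when 1 - q1 ≠ q
  have main : ∀ q1 ∈ Set.Icc (0:ℝ) 1,
      (p1 * (1 - a) ^ N + (s:ℝ) * p2 * (1 - (1 - a)/(s:ℝ)) ^ N ≤
        p1 * (1 - q1) ^ N + (s:ℝ) * p2 * (1 - (1 - q1)/(s:ℝ)) ^ N) ∧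
      (q1 ≠ a → p1 * (1 - a) ^ N + (s:ℝ) * p2 * (1 - (1 - a)/(s:ℝ)) ^ N <
        p1 * (1 - q1) ^ N + (s:ℝ) * p2 * (1 - (1 - q1)/(s:ℝ)) ^ N) := by
    intro q1 hq1mem
    obtain ⟨hql, hqr⟩ := hq1mem
    set u : ℝ := 1 - q1 with hu_def
    set v : ℝ := 1 - u / (s:ℝ) with hv_def
    have hu0 : 0 ≤ u := by rw [hu_def]; linarith
    have hu1 : u ≤ 1 := by rw [hu_def]; linarith
    have hv0 : 0 ≤ v := by
      rw [hv_def]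
      have : u / (s:ℝ) ≤ 1 := by
        rw [div_le_one hsR0]; linarith
      linarith
    rw [h1a, hv]
    have t2 : w ^ N + (N:ℝ) * w ^ (N-1) * (v - w) ≤ v ^ N :=
      tangent_le N hN v w hv0 hw0.le
    have T2 : ((s:ℝ)*p2) * (w ^ N + (N:ℝ) * w ^ (N-1) * (v - w)) ≤ ((s:ℝ)*p2) * v ^ N :=
      mul_le_mul_of_nonneg_left t2 (by positivity)
    have hvw : (s:ℝ) * (v - w) = q - u := by
      rw [hv_def, ← hv]
      field_simp
      ring
    have hzero : p1 * ((N:ℝ) * q ^ (N-1) * (u - q)) + (s:ℝ)*p2 * ((N:ℝ) * w ^ (N-1) * (v - w)) = 0 := by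
      have h1 : (s:ℝ)*p2 * ((N:ℝ) * w ^ (N-1) * (v - w)) = p2 * ((N:ℝ) * w ^ (N-1)) * ((s:ℝ) * (v-w)) := by
        ring
      rw [h1, hvw]
      linear_combination ((N:ℝ) * (u - q)) * hkey
    constructor
    · have t1 : q ^ N + (N:ℝ) * q ^ (N-1) * (u - q) ≤ u ^ N :=
        tangent_le N hN u q hu0 hq0.le
      have T1 : p1 * (q ^ N + (N:ℝ) * q ^ (N-1) * (u - q)) ≤ p1 * u ^ N :=
        mul_le_mul_of_nonneg_left t1 hp1.le
      linarith [T1, T2, hzero]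
    · intro hne
      have hune : u ≠ q := by
        intro h
        apply hne
        rw [ha]
        rw [hu_def] at h
        linarith
      have t1 : q ^ N + (N:ℝ) * q ^ (N-1) * (u - q) < u ^ N :=
        tangent_lt N hN u q hu0 hq0.le hune
      have T1 : p1 * (q ^ N + (N:ℝ) * q ^ (N-1) * (u - q)) < p1 * u ^ N :=
        (mul_lt_mul_iff_right₀ hp1).2 t1
      linarith [T1, T2, hzero]
  refine ⟨hmemA, fun q1 hm => (main q1 hm).1, ?_⟩
  intro q1 hm hmin
  by_contra hne
  have h1 := hmin a hmemA
  have h2' := (main q1 hm).2 hne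
  linarith
end

section
/- Let N ≥ 2 and define F(N, p) = N (1-p)^{N-1} p / (1 - (1-p)^N) for p in (0,1]. Then F(N, p) is strictly decreasing in p on (0,1], F(1, p) = 1 for all p, and lim_{p → 0^+} F(N, p) = 1. -/
open Finset

lemma one_sub_pow_eq (q : ℝ) (N : ℕ) :
    1 - q ^ N = (1 - q) * ∑ i ∈ range N, q ^ i := by
  linear_combination geom_sum_mul q N

lemma sum_ineq (N : ℕ) (hN : 2 ≤ N) {a b : ℝ} (hb : 0 ≤ b) (hab : b < a) :
    b ^ (N - 1) * ∑ i ∈ range N, a ^ i < a ^ (N - 1) * ∑ i ∈ range N, b ^ i := by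
  have ha : 0 ≤ a := hb.trans hab.le
  rw [Finset.mul_sum, Finset.mul_sum]
  apply Finset.sum_lt_sum
  · intro i hi
    rw [Finset.mem_range] at hi
    have hle : b ^ (N - 1 - i) ≤ a ^ (N - 1 - i) := pow_le_pow_left₀ hb hab.le _
    have hpa : a ^ (N - 1) = a ^ i * a ^ (N - 1 - i) := by
      rw [← pow_add]; congr 1; omega
    have hpb : b ^ (N - 1) = b ^ i * b ^ (N - 1 - i) := by
      rw [← pow_add]; congr 1; omega
    calc b ^ (N - 1) * a ^ i = (a ^ i * b ^ i) * b ^ (N - 1 - i) := by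
          rw [hpb]; ring
      _ ≤ (a ^ i * b ^ i) * a ^ (N - 1 - i) :=
          mul_le_mul_of_nonneg_left hle (by positivity)
      _ = a ^ (N - 1) * b ^ i := by rw [hpa]; ring
  · refine ⟨0, by simp; omega, ?_⟩
    simp only [pow_zero, mul_one]
    exact pow_lt_pow_left₀ hab hb (by omega)

theorem F_strict_anti (N : ℕ) (hN : 2 ≤ N) :
    StrictAntiOn (fun p : ℝ => (N:ℝ) * (1 - p) ^ (N - 1) * p / (1 - (1 - p) ^ N))
      (Set.Ioc (0:ℝ) 1) ∧
    (∀ p : ℝ, p ∈ Set.Ioc (0:ℝ) 1 →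
      (1:ℝ) * (1 - p) ^ (1 - 1) * p / (1 - (1 - p) ^ 1) = 1) ∧
    Filter.Tendsto (fun p : ℝ => (N:ℝ) * (1 - p) ^ (N - 1) * p / (1 - (1 - p) ^ N))
      (nhdsWithin 0 (Set.Ioi (0:ℝ))) (nhds 1) := by
  have hNne : N ≠ 0 := by omega
  have hNpos : (0:ℝ) < N := by exact_mod_cast Nat.pos_of_ne_zero hNne
  refine ⟨?_, ?_, ?_⟩
  · intro a ha b hb hab
    simp only
    have ha0 : 0 < a := ha.1
    have ha1 : a ≤ 1 := ha.2
    have hb0 : 0 < b := hb.1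
    have hb1 : b ≤ 1 := hb.2
    have hqb : 0 ≤ 1 - b := by linarith
    have hqa1 : 1 - a < 1 := by linarith
    have hda : 0 < 1 - (1 - a) ^ N := by
      have : (1 - a) ^ N < 1 := pow_lt_one₀ (by linarith) hqa1 hNne
      linarith
    have hdb : 0 < 1 - (1 - b) ^ N := by
      have : (1 - b) ^ N < 1 := pow_lt_one₀ hqb (by linarith) hNne
      linarith
    rw [div_lt_div_iff₀ hdb hda]
    have key := sum_ineq N hN hqb (show (1:ℝ) - b < 1 - a by linarith)
    have h := mul_lt_mul_of_pos_left key (show (0:ℝ) < N * a * b by positivity)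
    rw [one_sub_pow_eq (1 - a) N, one_sub_pow_eq (1 - b) N]
    nlinarith [h]
  · intro p hp
    have hp0 : p ≠ 0 := hp.1.ne'
    have h1 : (1:ℝ) - (1 - p) = p := by ring
    simp [h1, hp0]
  · have hcont : ContinuousAt
        (fun p : ℝ => (N:ℝ) * (1 - p) ^ (N - 1) / ∑ i ∈ range N, (1 - p) ^ i) 0 := by
      apply ContinuousAt.div
      · fun_prop
      · fun_prop
      · simp [hNne]
    have h0 : (N:ℝ) * (1 - (0:ℝ)) ^ (N - 1) / ∑ i ∈ range N, (1 - (0:ℝ)) ^ i = 1 := by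
      simp
      exact hNne
    have hg : Filter.Tendsto
        (fun p : ℝ => (N:ℝ) * (1 - p) ^ (N - 1) / ∑ i ∈ range N, (1 - p) ^ i)
        (nhdsWithin 0 (Set.Ioi (0:ℝ))) (nhds 1) := by
      have := hcont.tendsto
      rw [h0] at this
      exact this.mono_left nhdsWithin_le_nhds
    have h1 : ∀ᶠ p in nhdsWithin (0:ℝ) (Set.Ioi (0:ℝ)), p < 1 :=
      (eventually_lt_nhds (show (0:ℝ) < 1 by norm_num)).filter_mono nhdsWithin_le_nhds
    have hev : (fun p : ℝ => (N:ℝ) * (1 - p) ^ (N - 1) * p / (1 - (1 - p) ^ N))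
          =ᶠ[nhdsWithin (0:ℝ) (Set.Ioi (0:ℝ))]
        (fun p : ℝ => (N:ℝ) * (1 - p) ^ (N - 1) / ∑ i ∈ range N, (1 - p) ^ i) := by
      filter_upwards [self_mem_nhdsWithin, h1] with p hp hp1
      have hp0 : 0 < p := hp
      have hS : 0 < ∑ i ∈ range N, (1 - p) ^ i := by
        apply Finset.sum_pos
        · intro i _
          exact pow_pos (by linarith) i
        · exact Finset.nonempty_range_iff.mpr hNne
      rw [one_sub_pow_eq (1 - p) N]
      have h2 : (1:ℝ) - (1 - p) = p := by ring
      rw [h2]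
      field_simp
    exact Filter.Tendsto.congr' hev.symm hg
end

section
/- Consider the optimization min Σ_{i=1}^k p_i (1 - q_i)^N over the simplex {q_i ≥ 0, Σ q_i = 1}, with p_1 ≥ ... ≥ p_k > 0 and N ≥ 2. If the minimizer satisfies q_k* > 0 (all coordinates positive), then q_1* = 1 - (k-1) p_1^{-α} / Σ_{s=1}^k p_s^{-α} where α = 1/(N-1), and the condition q_k* > 0 is equivalent to (k-1) p_k^{-α} < Σ_{s=1}^k p_s^{-α}. -/
open Finset Filter Set Topology


lemma key_var (N : ℕ) (hN : 2 ≤ N) {k : ℕ} (p q : Fin k → ℝ)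
    (hq0 : ∀ i, 0 ≤ q i) (hqs : ∑ i, q i = 1)
    (hmin : ∀ r : Fin k → ℝ, (∀ i, 0 ≤ r i) → ∑ i, r i = 1 →
      ∑ i, p i * (1 - q i) ^ N ≤ ∑ i, p i * (1 - r i) ^ N)
    (i j : Fin k) (hqi : 0 < q i) :
    p j * (1 - q j)^(N-1) ≤ p i * (1 - q i)^(N-1) := by
  by_cases hij : j = i
  · subst hij; exact le_refl _
  set r : ℝ → Fin k → ℝ := fun t l => if l = i then q i - t else if l = j then q j + t else q l
    with hr
  have hji : j ≠ i := hij
  have hjmem : j ∈ (Finset.univ.erase i : Finset (Fin k)) :=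
    Finset.mem_erase.mpr ⟨hji, Finset.mem_univ j⟩
  have split : ∀ f : Fin k → ℝ, ∑ l, f l =
      f i + (f j + ∑ l ∈ (Finset.univ.erase i).erase j, f l) := by
    intro f
    rw [← Finset.add_sum_erase _ f (Finset.mem_univ i), ← Finset.add_sum_erase _ f hjmem]
  set h : ℝ → ℝ := fun t => p i * ((1 - q i) + t)^N + p j * ((1 - q j) - t)^N with hh
  have hobj : ∀ t, ∑ l, p l * (1 - r t l)^N =
      h t + ∑ l ∈ (Finset.univ.erase i).erase j, p l * (1 - q l)^N := by
    intro t
    rw [split (fun l => p l * (1 - r t l)^N)]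
    have e1 : r t i = q i - t := by simp [hr]
    have e2 : r t j = q j + t := by simp [hr, hji]
    have e3 : ∀ l ∈ (Finset.univ.erase i).erase j, p l * (1 - r t l)^N = p l * (1 - q l)^N := by
      intro l hl
      rcases Finset.mem_erase.mp hl with ⟨hlj, hl'⟩
      rcases Finset.mem_erase.mp hl' with ⟨hli, _⟩
      simp [hr, hli, hlj]
    rw [e1, e2, Finset.sum_congr rfl e3]
    simp only [hh]; ring
  have hbase : ∑ l, p l * (1 - q l)^N =
      h 0 + ∑ l ∈ (Finset.univ.erase i).erase j, p l * (1 - q l)^N := by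
    rw [split (fun l => p l * (1 - q l)^N)]
    simp [hh]
    ring_nf
  have hmono : ∀ t ∈ Set.Icc (0:ℝ) (q i), h 0 ≤ h t := by
    intro t ht
    have hfeas0 : ∀ l, 0 ≤ r t l := by
      intro l
      by_cases hli : l = i
      · simp [hr, hli]; linarith [ht.2]
      by_cases hlj : l = j
      · simp [hr, hli, hlj, hji]; linarith [hq0 j, ht.1]
      · simpa [hr, hli, hlj] using hq0 l
    have hfeas1 : ∑ l, r t l = 1 := by
      rw [split (fun l => r t l)]
      have e1 : r t i = q i - t := by simp [hr]
      have e2 : r t j = q j + t := by simp [hr, hji]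
      have e3 : ∀ l ∈ (Finset.univ.erase i).erase j, r t l = q l := by
        intro l hl
        rcases Finset.mem_erase.mp hl with ⟨hlj, hl'⟩
        rcases Finset.mem_erase.mp hl' with ⟨hli, _⟩
        simp [hr, hli, hlj]
      rw [e1, e2, Finset.sum_congr rfl e3]
      have := split (fun l => q l)
      rw [this] at hqs
      linarith
    have := hmin (r t) hfeas0 hfeas1
    rw [hobj t, hbase] at this
    linarith
  -- derivative of h at 0
  have hA : HasDerivAt (fun t : ℝ => (1 - q i) + t) 1 0 := (hasDerivAt_id 0).const_add _
  have hB : HasDerivAt (fun t : ℝ => (1 - q j) - t) (-1) 0 := (hasDerivAt_id 0).const_sub _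
  have hA' := (hA.pow N).const_mul (p i)
  have hB' := (hB.pow N).const_mul (p j)
  have hd : HasDerivAt h
      (p i * ((N:ℝ) * ((1 - q i) + 0)^(N-1) * 1) + p j * ((N:ℝ) * ((1 - q j) - 0)^(N-1) * (-1)))
      0 := hA'.add hB'
  set D := p i * ((N:ℝ) * ((1 - q i) + 0)^(N-1) * 1) + p j * ((N:ℝ) * ((1 - q j) - 0)^(N-1) * (-1))
    with hD
  have hslope : Tendsto (slope h 0) (𝓝[>] (0:ℝ)) (𝓝 D) := by
    have := hasDerivAt_iff_tendsto_slope.mp hd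
    exact this.mono_left (nhdsWithin_mono _ (fun x hx => ne_of_gt hx))
  have hDpos : 0 ≤ D := by
    refine ge_of_tendsto hslope ?_
    filter_upwards [Ioo_mem_nhdsGT_of_mem (Set.mem_Ico.mpr ⟨le_refl _, hqi⟩)] with t ht
    have h0 : h 0 ≤ h t := hmono t ⟨ht.1.le, ht.2.le⟩
    have he : slope h 0 t = (h t - h 0) / t := by simp [slope_def_field]
    rw [he]
    exact div_nonneg (by linarith) ht.1.le
  have hNpos : (0:ℝ) < N := by positivity
  rw [hD] at hDpos
  simp only [add_zero, sub_zero, mul_one, mul_neg_one] at hDpos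
  have hN' : p j * (1 - q j)^(N-1) * N ≤ p i * (1 - q i)^(N-1) * N := by nlinarith [hDpos]
  exact le_of_mul_le_mul_right hN' hNpos

lemma root_eq (N : ℕ) (hN : 2 ≤ N) {x y : ℝ} (hx : 0 ≤ x) (hxy : x^(N-1) = y) :
    x = y ^ (1/((N:ℝ)-1)) := by
  have h2 : (2:ℝ) ≤ (N:ℝ) := by exact_mod_cast hN
  have hc : ((N-1 : ℕ) : ℝ) = (N:ℝ) - 1 := by
    rw [Nat.cast_sub (by omega : 1 ≤ N)]; norm_num
  have hne : (N:ℝ) - 1 ≠ 0 := by linarith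
  have hmul : ((N-1:ℕ):ℝ) * (1/((N:ℝ)-1)) = 1 := by
    rw [hc, mul_one_div, div_self hne]
  subst hxy
  rw [← Real.rpow_natCast x (N-1), ← Real.rpow_mul hx, hmul, Real.rpow_one]

lemma root_le (N : ℕ) (hN : 2 ≤ N) {x c : ℝ} (hx : 0 ≤ x) (hc : 0 ≤ c)
    (h : c ≤ x^(N-1)) : c ^ (1/((N:ℝ)-1)) ≤ x := by
  have h2 : (2:ℝ) ≤ (N:ℝ) := by exact_mod_cast hN
  have hexp : (0:ℝ) ≤ 1/((N:ℝ)-1) := le_of_lt (div_pos one_pos (by linarith))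
  have hle := Real.rpow_le_rpow hc h hexp
  rwa [← root_eq N hN hx rfl] at hle

theorem case_k_characterization (N k : ℕ) (hN : 2 ≤ N) (hk : 2 ≤ k)
    (p : Fin k → ℝ) (hp : ∀ i, 0 < p i)
    (hpmono : ∀ i j : Fin k, i ≤ j → p j ≤ p i)
    (q : Fin k → ℝ) (hq0 : ∀ i, 0 ≤ q i) (hqs : ∑ i, q i = 1)
    (hmin : ∀ r : Fin k → ℝ, (∀ i, 0 ≤ r i) → ∑ i, r i = 1 →
      ∑ i, p i * (1 - q i) ^ N ≤ ∑ i, p i * (1 - r i) ^ N) :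
    (0 < q ⟨k - 1, by omega⟩ →
      q ⟨0, by omega⟩ = 1 - ((k:ℝ) - 1) * (p ⟨0, by omega⟩) ^ (-(1:ℝ)/((N:ℝ)-1)) /
        ∑ s, (p s) ^ (-(1:ℝ)/((N:ℝ)-1))) ∧
    (0 < q ⟨k - 1, by omega⟩ ↔
      ((k:ℝ) - 1) * (p ⟨k - 1, by omega⟩) ^ (-(1:ℝ)/((N:ℝ)-1)) <
        ∑ s, (p s) ^ (-(1:ℝ)/((N:ℝ)-1))) := by
  have hN2 : (2:ℝ) ≤ (N:ℝ) := by exact_mod_cast hN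
  set α : ℝ := 1/((N:ℝ)-1) with hα
  have hαpos : 0 < α := by rw [hα]; exact div_pos one_pos (by linarith)
  have hβ : (-(1:ℝ)/((N:ℝ)-1)) = -α := by rw [hα, neg_div]
  simp only [hβ]
  set kk : Fin k := ⟨k-1, by omega⟩ with hkk
  set z : Fin k := ⟨0, by omega⟩ with hz
  set S : ℝ := ∑ s, (p s) ^ (-α) with hS
  have hSpos : 0 < S :=
    Finset.sum_pos (fun s _ => Real.rpow_pos_of_pos (hp s) _) ⟨z, Finset.mem_univ z⟩
  have key := key_var N hN p q hq0 hqs hmin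
  have hle1 : ∀ l, q l ≤ 1 := by
    intro l
    have := Finset.single_le_sum (f := q) (fun m _ => hq0 m) (Finset.mem_univ l)
    linarith [hqs ▸ this]
  have pair : ∀ l m : Fin k, l ≠ m → q l + q m ≤ 1 := by
    intro l m hlm
    have hsub := Finset.sum_le_sum_of_subset_of_nonneg
      (Finset.subset_univ ({l, m} : Finset (Fin k))) (fun i _ _ => hq0 i)
    rw [Finset.sum_pair hlm] at hsub
    linarith [hqs ▸ hsub]
  have hlekk : ∀ l : Fin k, l ≤ kk := by
    intro l
    rw [Fin.le_def]
    have := l.isLt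
    simp only [hkk]
    omega
  have hzkk : z ≠ kk := by
    simp only [hz, hkk, Fin.ne_iff_vne]
    omega
  have allpos : 0 < q kk → ∀ l, 0 < q l := by
    intro hqk l
    rcases lt_or_eq_of_le (hq0 l) with h | h
    · exact h
    exfalso
    have hk1 := key kk l hqk
    rw [← h] at hk1
    simp only [sub_zero, one_pow, mul_one] at hk1
    have hple : p kk ≤ p l := hpmono l kk (hlekk l)
    have hqk1 : q kk ≤ 1 := hle1 kk
    have hlt : (1 - q kk)^(N-1) < 1 :=
      pow_lt_one₀ (by linarith) (by linarith) (by omega)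
    nlinarith [hp kk]
  have char : 0 < q kk → ∀ l, 1 - q l = ((k:ℝ)-1) * (p l) ^ (-α) / S := by
    intro hqk
    have hall := allpos hqk
    have hlt1 : ∀ l, q l < 1 := by
      intro l
      by_cases hl : l = kk
      · have := pair l z (by rw [hl]; exact hzkk.symm)
        linarith [hall z]
      · have := pair l kk hl
        linarith [hall kk]
    set lam := p kk * (1 - q kk)^(N-1) with hlam
    have hlampos : 0 < lam :=
      mul_pos (hp kk) (pow_pos (by linarith [hlt1 kk]) _)
    have heq : ∀ l, p l * (1 - q l)^(N-1) = lam := fun l =>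
      le_antisymm (key kk l hqk) (key l kk (hall l))
    have hform : ∀ l, 1 - q l = lam ^ α * (p l) ^ (-α) := by
      intro l
      have h1 : (1 - q l)^(N-1) = lam / p l := by
        rw [eq_div_iff (ne_of_gt (hp l))]
        linarith [heq l]
      have h2 : 1 - q l = (lam / p l) ^ α := by
        rw [hα]
        exact root_eq N hN (by linarith [hlt1 l]) h1
      rw [h2, Real.div_rpow hlampos.le (hp l).le, Real.rpow_neg (hp l).le, div_eq_mul_inv]
    have hsumq : ∑ l, (1 - q l) = (k:ℝ) - 1 := by
      rw [Finset.sum_sub_distrib, hqs]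
      simp
    have hsum : (k:ℝ) - 1 = lam ^ α * S := by
      rw [← hsumq, Finset.sum_congr rfl (fun l _ => hform l), ← Finset.mul_sum, hS]
    have hlamα : lam ^ α = ((k:ℝ)-1)/S := by
      rw [eq_div_iff (ne_of_gt hSpos)]
      linarith [hsum]
    intro l
    rw [hform l, hlamα]
    ring
  constructor
  · intro hqk
    have := char hqk z
    linarith [this]
  constructor
  · intro hqk
    have hc := char hqk kk
    have h1 : ((k:ℝ)-1) * (p kk) ^ (-α) / S < 1 := by linarith [hc]
    rw [div_lt_one hSpos] at h1
    exact h1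
  · intro hcon
    by_contra hqk
    have hqk0 : q kk = 0 := le_antisymm (not_lt.mp hqk) (hq0 kk)
    have hlb : ∀ l, p kk ^ α * p l ^ (-α) ≤ 1 - q l := by
      intro l
      have hbig : p kk ≤ p l * (1 - q l)^(N-1) := by
        rcases lt_or_eq_of_le (hq0 l) with h | h
        · have hk2 := key l kk h
          rw [hqk0] at hk2
          simpa using hk2
        · rw [← h]
          simpa using hpmono l kk (hlekk l)
      have h1 : p kk / p l ≤ (1 - q l)^(N-1) := by
        rw [div_le_iff₀ (hp l)]
        linarith [hbig]
      have h2 := root_le N hN (by linarith [hle1 l]) (div_pos (hp kk) (hp l)).le h1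
      rw [← hα, Real.div_rpow (hp kk).le (hp l).le] at h2
      rw [Real.rpow_neg (hp l).le, ← div_eq_mul_inv]
      exact h2
    have hsumq : ∑ l, (1 - q l) = (k:ℝ) - 1 := by
      rw [Finset.sum_sub_distrib, hqs]
      simp
    have hsum2 : p kk ^ α * S ≤ (k:ℝ) - 1 := by
      calc p kk ^ α * S = ∑ l, p kk ^ α * p l ^ (-α) := by rw [hS, Finset.mul_sum]
        _ ≤ ∑ l, (1 - q l) := Finset.sum_le_sum (fun l _ => hlb l)
        _ = (k:ℝ) - 1 := hsumq
    have hpα : 0 < p kk ^ α := Real.rpow_pos_of_pos (hp kk) _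
    have hneg : p kk ^ (-α) = (p kk ^ α)⁻¹ := Real.rpow_neg (hp kk).le α
    rw [hneg, ← div_eq_mul_inv, div_lt_iff₀ hpα] at hcon
    nlinarith [hsum2]
end

section
/- Let α = 1/(N-1) with N ≥ 2, let ε ∈ (0,1), k ≥ 3, and suppose p_1 satisfies (1-ε)/k ≤ p_1 < (1-ε)/(k-1+((k-2)/(k-1))^{N-1}). Define p_k = 1 - ε - (k-1)p_1. Then p_k > 0, p_1 ≥ p_k, and (k-1)p_1^{-α} > (k-2)p_k^{-α}. -/
theorem case_k_feasibility (N k : ℕ) (hN : 2 ≤ N) (hk : 3 ≤ k)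
    (ε p1 : ℝ) (hε : ε ∈ Set.Ioo (0:ℝ) 1)
    (h1 : (1 - ε)/(k:ℝ) ≤ p1)
    (h2 : p1 < (1 - ε)/((k:ℝ) - 1 + (((k:ℝ) - 2)/((k:ℝ) - 1)) ^ (N - 1))) :
    0 < 1 - ε - ((k:ℝ) - 1) * p1 ∧
    1 - ε - ((k:ℝ) - 1) * p1 ≤ p1 ∧
    ((k:ℝ) - 2) * (1 - ε - ((k:ℝ) - 1) * p1) ^ (-(1:ℝ)/((N:ℝ)-1)) <
      ((k:ℝ) - 1) * p1 ^ (-(1:ℝ)/((N:ℝ)-1)) := by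
  obtain ⟨hε0, hε1⟩ := hε
  have hk3 : (3:ℝ) ≤ (k:ℝ) := by exact_mod_cast hk
  have hk1 : (0:ℝ) < (k:ℝ) - 1 := by linarith
  have hk2 : (0:ℝ) < (k:ℝ) - 2 := by linarith
  have hN2 : (2:ℝ) ≤ (N:ℝ) := by exact_mod_cast hN
  have hN1 : (0:ℝ) < (N:ℝ) - 1 := by linarith
  set c : ℝ := ((k:ℝ) - 2)/((k:ℝ) - 1) with hc
  have hc0 : 0 < c := div_pos hk2 hk1
  set r : ℝ := c ^ (N - 1) with hr
  have hr0 : 0 < r := pow_pos hc0 _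
  set D : ℝ := (k:ℝ) - 1 + r with hD
  have hD0 : 0 < D := by positivity
  have h1ε : 0 < 1 - ε := by linarith
  have hp1pos : 0 < p1 := lt_of_lt_of_le (by positivity) h1
  -- lower bound for p_k
  have hub : p1 < (1 - ε)/D := h2
  have hpk_lb : (1 - ε) * r / D < 1 - ε - ((k:ℝ) - 1) * p1 := by
    have hub' : p1 * D < 1 - ε := (lt_div_iff₀ hD0).mp hub
    have hDeq : D = (k:ℝ) - 1 + r := hD
    rw [div_lt_iff₀ hD0]
    nlinarith [mul_lt_mul_of_pos_left hub' hk1, mul_pos h1ε hr0]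
  have hpk0 : 0 < 1 - ε - ((k:ℝ) - 1) * p1 :=
    lt_trans (by positivity) hpk_lb
  refine ⟨hpk0, ?_, ?_⟩
  · have := (div_le_iff₀ (by positivity : (0:ℝ) < (k:ℝ))).mp h1
    linarith
  · set α : ℝ := -(1:ℝ)/((N:ℝ)-1) with hα
    have hαneg : α < 0 := div_neg_of_neg_of_pos (by norm_num) hN1
    have hlb0 : 0 < (1 - ε) * r / D := by positivity
    -- key identity: ((1-ε)*r/D)^α * (k-2) = ((1-ε)/D)^α * (k-1)
    have hrα : r ^ α = ((k:ℝ) - 1)/((k:ℝ) - 2) := by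
      have hcast : ((N - 1 : ℕ) : ℝ) = (N:ℝ) - 1 := by
        rw [Nat.cast_sub (by omega), Nat.cast_one]
      rw [hr, ← Real.rpow_natCast c (N - 1), ← Real.rpow_mul hc0.le, hcast]
      have : ((N:ℝ) - 1) * α = -1 := by
        rw [hα]; field_simp [hN1.ne']
      rw [this, Real.rpow_neg_one, hc]
      rw [inv_div]
    have hkey : ((1 - ε) * r / D) ^ α * ((k:ℝ) - 2) = ((1 - ε)/D) ^ α * ((k:ℝ) - 1) := by
      have : (1 - ε) * r / D = ((1 - ε)/D) * r := by ring
      rw [this, Real.mul_rpow (by positivity) hr0.le, hrα]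
      field_simp
    calc ((k:ℝ) - 2) * (1 - ε - ((k:ℝ) - 1) * p1) ^ α
        < ((k:ℝ) - 2) * ((1 - ε) * r / D) ^ α := by
          exact mul_lt_mul_of_pos_left
            (Real.rpow_lt_rpow_of_neg hlb0 hpk_lb hαneg) hk2
      _ = ((k:ℝ) - 1) * ((1 - ε)/D) ^ α := by linarith [hkey]
      _ < ((k:ℝ) - 1) * p1 ^ α := by
          exact mul_lt_mul_of_pos_left
            (Real.rpow_lt_rpow_of_neg hp1pos hub hαneg) hk1
end

section
/- Let N ≥ 2, α = 1/(N-1), k ≥ 3, ε ∈ (0,1), and define u(p_1) = 1 - (k-1)p_1^{-α} / ((k-1)p_1^{-α} + (1 + p_1 - ε - k p_1)^{-α}) on the interval (1-ε)/k ≤ p_1 < (1-ε)/(k-1). Then u is a strictly increasing function of p_1 on this interval. -/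
open Set

/-- Writing the share as `c / (c + (g / f) ^ α)`: the ratio `g / f` decreases and `α < 0`, so
`(g / f) ^ α` increases. -/
theorem rpow_share_strictAntiOn {s : Set ℝ} {f g : ℝ → ℝ} {c α : ℝ} (hc : 0 < c) (hα : α < 0)
    (hf : ∀ x ∈ s, 0 < f x) (hg : ∀ x ∈ s, 0 < g x) (hf_mono : StrictMonoOn f s)
    (hg_anti : AntitoneOn g s) :
    StrictAntiOn (fun x => c * f x ^ α / (c * f x ^ α + g x ^ α)) s := by
  have share_eq : ∀ x ∈ s, c * f x ^ α / (c * f x ^ α + g x ^ α) = c / (c + (g x / f x) ^ α) := by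
    intro x hx
    have hfα : 0 < f x ^ α := Real.rpow_pos_of_pos (hf x hx) α
    rw [Real.div_rpow (hg x hx).le (hf x hx).le]
    field_simp
  intro x hx y hy hxy
  have ratio_lt : g y / f y < g x / f x :=
    div_lt_div₀' (hg_anti hx hy hxy.le) (hf_mono hx hy hxy) (hg x hx) (hf x hx)
  have rpow_lt : (g x / f x) ^ α < (g y / f y) ^ α :=
    Real.rpow_lt_rpow_of_neg (div_pos (hg y hy) (hf y hy)) ratio_lt hα
  have hx_pos : 0 < c + (g x / f x) ^ α := by
    have := Real.rpow_pos_of_pos (div_pos (hg x hx) (hf x hx)) α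
    linarith
  simp only [share_eq x hx, share_eq y hy]
  exact div_lt_div_of_pos_left hc hx_pos (by linarith)

theorem case_k_upper_bound_increasing (N k : ℕ) (hN : 2 ≤ N) (hk : 3 ≤ k)
    (ε : ℝ) (hε : ε ∈ Set.Ioo (0:ℝ) 1) :
    StrictMonoOn (fun p1 : ℝ =>
      1 - ((k:ℝ) - 1) * p1 ^ (-(1:ℝ)/((N:ℝ)-1)) /
        (((k:ℝ) - 1) * p1 ^ (-(1:ℝ)/((N:ℝ)-1)) +
          (1 + p1 - ε - (k:ℝ) * p1) ^ (-(1:ℝ)/((N:ℝ)-1))))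
      (Set.Ico ((1 - ε)/(k:ℝ)) ((1 - ε)/((k:ℝ) - 1))) := by
  set I := Ico ((1 - ε)/(k:ℝ)) ((1 - ε)/((k:ℝ) - 1))
  have hN' : (2:ℝ) ≤ N := by exact_mod_cast hN
  have hk' : (3:ℝ) ≤ k := by exact_mod_cast hk
  have hk1 : (0:ℝ) < k - 1 := by linarith
  have hα : -(1:ℝ) / ((N:ℝ) - 1) < 0 := div_neg_of_neg_of_pos (by norm_num) (by linarith)
  have p_pos : ∀ p ∈ I, 0 < p := fun p hp =>
    (div_pos (by linarith [hε.2]) (by linarith)).trans_le hp.1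
  have rest_pos : ∀ p ∈ I, 0 < 1 + p - ε - (k:ℝ) * p := fun p hp => by
    have := (lt_div_iff₀ hk1).mp hp.2
    linarith
  have rest_anti : Antitone fun p : ℝ => 1 + p - ε - (k:ℝ) * p := fun p q hpq => by nlinarith
  have share_anti :=
    rpow_share_strictAntiOn hk1 hα p_pos rest_pos strictMonoOn_id (rest_anti.antitoneOn I)
  intro x hx y hy hxy
  have := share_anti hx hy hxy
  simp only at this ⊢
  linarith
end
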